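/- Let α ∈ (0,1) and T > 0. Assume f ∈ AC([0,T]) and t ↦ t^{1−α} f′(t) ∈ L^∞(0,T). Then there exists a constant c₀ depending only on α such that for all 0 ≤ t₁ ≤ t₂ ≤ T, |t₂^{1−α} (I^α f′)(t₂) − t₁^{1−α} (I^α f′)(t₁)| ≤ c₀ ‖t^{1−α} f′‖_{L^∞(0,T)} |t₂ − t₁|^α. In particular t ↦ t^{1−α} (I^α f′)(t) belongs to C^{0,α}([0,T]) (with value 0 at t = 0) and D^α f ∈ C^{0,1−α}_{loc}((0,T]). -/

import Mathlib

/-!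
Write `w(τ) = τ^(α-1)`, so that `|f'| ≤ M w`. Both `t^(1-α) (I^α f')(t)` and `(I^(1-α) f')(t)` are
constant multiples of `∫₀ᵗ k_t f'` for a nonnegative kernel that decreases in `t`, namely
`k_t(τ) = t^(1-α) (t-τ)^(α-1)`, resp. `k_t(τ) = (t-τ)^(-α)`. Hence
`|∫₀^t₂ k_t₂ f' - ∫₀^t₁ k_t₁ f'| ≤ M (∫₀^t₁ (k_t₁ - k_t₂) w + ∫_t₁^t₂ k_t₂ w)`.
The substitution `τ = t s` shows that the total mass `∫₀ᵗ k_t w` is `t^α B(α,α)`, resp. `B(1-α,α)`,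
which is nondecreasing in `t`; so the first integral is at most the second, and everything reduces
to the tail `∫_t₁^t₂ k_t₂ w`. That tail is `O((t₂-t₁)^α)` because
`x^(α-1) y^(α-1) ≤ ((x+y)/2)^(α-1) (x^(α-1) + y^(α-1))`, resp. at most
`t₁^(α-1) (t₂-t₁)^(1-α) / (1-α)`.
-/

open MeasureTheory Set Filter
open scoped Topology NNReal

/-- Riemann–Liouville fractional integral of order `β`:
`(I^β g)(t) = (1/Γ(β)) ∫₀^t (t-τ)^{β-1} g(τ) dτ`. -/
noncomputable def fracInt (β : ℝ) (g : ℝ → ℝ) (t : ℝ) : ℝ :=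
  (1 / Real.Gamma β) * ∫ τ in (0:ℝ)..t, (t - τ) ^ (β - 1) * g τ

open intervalIntegral

section WeightedBound

variable {K g w : ℝ → ℝ} {M a b : ℝ}

lemma ae_restrict_Ioc_abs_mul_le (hK : ∀ τ ∈ Ioo a b, 0 ≤ K τ)
    (hg : ∀ᵐ τ ∂volume.restrict (Ioo a b), |g τ| ≤ M * w τ) :
    ∀ᵐ τ ∂volume.restrict (Ioc a b), |K τ * g τ| ≤ M * (K τ * w τ) := by
  rw [← Measure.restrict_congr_set Ioo_ae_eq_Ioc]
  filter_upwards [hg, ae_restrict_mem measurableSet_Ioo] with τ hgτ hτ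
  rw [abs_mul, abs_of_nonneg (hK τ hτ), mul_left_comm]
  exact mul_le_mul_of_nonneg_left hgτ (hK τ hτ)

lemma intervalIntegrable_mul_of_abs_le (hab : a ≤ b)
    (hKm : AEStronglyMeasurable K (volume.restrict (Ioc a b)))
    (hgm : AEStronglyMeasurable g (volume.restrict (Ioc a b)))
    (hK : ∀ τ ∈ Ioo a b, 0 ≤ K τ) (hg : ∀ᵐ τ ∂volume.restrict (Ioo a b), |g τ| ≤ M * w τ)
    (hKw : IntervalIntegrable (fun τ => K τ * w τ) volume a b) :
    IntervalIntegrable (fun τ => K τ * g τ) volume a b := by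
  refine (hKw.const_mul M).mono_fun' ?_ ?_ <;> rw [uIoc_of_le hab]
  · exact hKm.mul hgm
  · exact ae_restrict_Ioc_abs_mul_le hK hg

lemma abs_integral_mul_le_of_abs_le (hab : a ≤ b) (hK : ∀ τ ∈ Ioo a b, 0 ≤ K τ)
    (hg : ∀ᵐ τ ∂volume.restrict (Ioo a b), |g τ| ≤ M * w τ)
    (hKw : IntervalIntegrable (fun τ => K τ * w τ) volume a b) :
    |∫ τ in a..b, K τ * g τ| ≤ M * ∫ τ in a..b, K τ * w τ := by
  rw [← intervalIntegral.integral_const_mul, ← Real.norm_eq_abs]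
  exact norm_integral_le_of_norm_le hab
    ((ae_restrict_iff' measurableSet_Ioc).1 (ae_restrict_Ioc_abs_mul_le (g := g) hK hg))
    (hKw.const_mul M)

end WeightedBound

lemma rpow_mul_rpow_le_of_nonpos {p q x y : ℝ} (hx : 0 < x) (hy : 0 < y) (hp : p ≤ 0)
    (hq : q ≤ 0) : x ^ p * y ^ q ≤ ((x + y) / 2) ^ q * x ^ p + ((x + y) / 2) ^ p * y ^ q := by
  have hxp := Real.rpow_nonneg hx.le p
  have hyq := Real.rpow_nonneg hy.le q
  rcases le_total x y with hxy | hyx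
  · have : y ^ q ≤ ((x + y) / 2) ^ q := Real.rpow_le_rpow_of_nonpos (by positivity) (by linarith) hq
    nlinarith [Real.rpow_nonneg (by positivity : 0 ≤ (x + y) / 2) p]
  · have : x ^ p ≤ ((x + y) / 2) ^ p := Real.rpow_le_rpow_of_nonpos (by positivity) (by linarith) hp
    nlinarith [Real.rpow_nonneg (by positivity : 0 ≤ (x + y) / 2) q]

lemma holderOnWith_of_abs_sub_le {f : ℝ → ℝ} {s : Set ℝ} {C r : ℝ} (hC : 0 ≤ C) (hr : 0 ≤ r)
    (h : ∀ x ∈ s, ∀ y ∈ s, x ≤ y → |f y - f x| ≤ C * (y - x) ^ r) :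
    HolderOnWith C.toNNReal r.toNNReal f s := by
  have key : ∀ x ∈ s, ∀ y ∈ s, x ≤ y →
      edist (f x) (f y) ≤ C.toNNReal * edist x y ^ (r.toNNReal : ℝ) := by
    intro x hx y hy hxy
    rw [edist_comm, edist_comm x, edist_dist, edist_dist, Real.dist_eq, Real.dist_eq,
      abs_of_nonneg (sub_nonneg.2 hxy), Real.coe_toNNReal r hr,
      ENNReal.ofReal_rpow_of_nonneg (sub_nonneg.2 hxy) hr]
    change _ ≤ ENNReal.ofReal C * _
    rw [← ENNReal.ofReal_mul hC]
    exact ENNReal.ofReal_le_ofReal (h x hx y hy hxy)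
  intro x hx y hy
  rcases le_total x y with hxy | hyx
  · exact key x hx y hy hxy
  · rw [edist_comm, edist_comm x]
    exact key y hy x hx hyx

lemma abs_le_mul_rpow_of_abs_rpow_mul_le {x y M s : ℝ} (hx : 0 < x) (h : |x ^ (1 - s) * y| ≤ M) :
    |y| ≤ M * x ^ (s - 1) := by
  rwa [abs_mul, abs_of_pos (Real.rpow_pos_of_pos hx _), ← le_div_iff₀' (Real.rpow_pos_of_pos hx _),
    div_eq_mul_inv, ← Real.rpow_neg hx.le, neg_sub] at h

lemma intervalIntegrable_sub_rpow (t : ℝ) {p : ℝ} (hp : -1 < p) (a b : ℝ) :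
    IntervalIntegrable (fun τ => (t - τ) ^ p) volume a b := by
  simpa using (intervalIntegrable_rpow' (a := t - a) (b := t - b) hp).comp_sub_left t

lemma integral_sub_rpow {t p : ℝ} (hp : -1 < p) (a b : ℝ) :
    ∫ τ in a..b, (t - τ) ^ p = ((t - a) ^ (p + 1) - (t - b) ^ (p + 1)) / (p + 1) := by
  rw [integral_comp_sub_left (fun u => u ^ p) t, integral_rpow (Or.inl hp)]

lemma intervalIntegrable_sub_rpow_mul_rpow {p q t : ℝ} (hp : -1 < p) (hq : -1 < q)
    (hp0 : p ≤ 0) (hq0 : q ≤ 0) (ht : 0 ≤ t) :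
    IntervalIntegrable (fun τ => (t - τ) ^ p * τ ^ q) volume 0 t := by
  have hG : IntervalIntegrable (fun τ => (t / 2) ^ q * (t - τ) ^ p + (t / 2) ^ p * τ ^ q)
      volume 0 t :=
    ((intervalIntegrable_sub_rpow t hp 0 t).const_mul _).add
      ((intervalIntegrable_rpow' hq).const_mul _)
  refine hG.mono_fun' (by fun_prop) ?_
  rw [uIoc_of_le ht, ← Measure.restrict_congr_set Ioo_ae_eq_Ioc]
  filter_upwards [ae_restrict_mem measurableSet_Ioo] with τ hτ
  have hτt : 0 < t - τ := sub_pos.2 hτ.2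
  rw [Real.norm_eq_abs,
    abs_of_nonneg (mul_nonneg (Real.rpow_nonneg hτt.le _) (Real.rpow_nonneg hτ.1.le _))]
  simpa using rpow_mul_rpow_le_of_nonpos hτt hτ.1 hp0 hq0

lemma integral_sub_rpow_mul_rpow {p q t : ℝ} (ht : 0 < t) :
    ∫ τ in 0..t, (t - τ) ^ p * τ ^ q = t ^ (p + q + 1) * ∫ s in 0..1, (1 - s) ^ p * s ^ q := by
  have hscale := integral_comp_mul_left (fun τ => (t - τ) ^ p * τ ^ q) ht.ne' (a := 0) (b := 1)
  simp only [mul_zero, mul_one, smul_eq_mul] at hscale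
  have hpt : ∀ s ∈ uIcc (0:ℝ) 1, (t - t * s) ^ p * (t * s) ^ q
      = t ^ (p + q) * ((1 - s) ^ p * s ^ q) := by
    intro s hs
    rw [uIcc_of_le zero_le_one] at hs
    rw [show t - t * s = t * (1 - s) by ring, Real.mul_rpow ht.le (by linarith [hs.2]),
      Real.mul_rpow ht.le hs.1, Real.rpow_add ht]
    ring
  rw [integral_congr hpt, intervalIntegral.integral_const_mul] at hscale
  rw [eq_inv_mul_iff_mul_eq₀ ht.ne'] at hscale
  rw [Real.rpow_add_one ht.ne', ← hscale]
  ring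

lemma abs_integral_sub_integral_le_of_kernel_le {k₁ k₂ g w : ℝ → ℝ} {M t₁ t₂ : ℝ}
    (ht₁ : 0 ≤ t₁) (ht₁₂ : t₁ ≤ t₂) (hM : 0 ≤ M)
    (hk₁m : AEStronglyMeasurable k₁ volume) (hk₂m : AEStronglyMeasurable k₂ volume)
    (hgm : AEStronglyMeasurable g (volume.restrict (Ioc 0 t₂)))
    (hk₂ : ∀ τ ∈ Ioo 0 t₂, 0 ≤ k₂ τ) (hk : ∀ τ ∈ Ioo 0 t₁, k₂ τ ≤ k₁ τ)
    (hg : ∀ᵐ τ ∂volume.restrict (Ioo 0 t₂), |g τ| ≤ M * w τ)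
    (hk₁w : IntervalIntegrable (fun τ => k₁ τ * w τ) volume 0 t₁)
    (hk₂w : IntervalIntegrable (fun τ => k₂ τ * w τ) volume 0 t₂)
    (hmono : ∫ τ in 0..t₁, k₁ τ * w τ ≤ ∫ τ in 0..t₂, k₂ τ * w τ) :
    |(∫ τ in 0..t₂, k₂ τ * g τ) - ∫ τ in 0..t₁, k₁ τ * g τ|
      ≤ 2 * M * ∫ τ in t₁..t₂, k₂ τ * w τ := by
  have hIoo₁ : Ioo 0 t₁ ⊆ Ioo 0 t₂ := Ioo_subset_Ioo_right ht₁₂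
  have hIoo₂ : Ioo t₁ t₂ ⊆ Ioo 0 t₂ := Ioo_subset_Ioo_left ht₁
  have hg₁ := ae_restrict_of_ae_restrict_of_subset hIoo₁ hg
  have hg₂ := ae_restrict_of_ae_restrict_of_subset hIoo₂ hg
  have hgm₁ := hgm.mono_set (Ioc_subset_Ioc_right ht₁₂)
  have hgm₂ := hgm.mono_set (Ioc_subset_Ioc_left ht₁)
  have hk₂w₁ := hk₂w.mono_set (uIcc_subset_uIcc left_mem_uIcc (mem_uIcc_of_le ht₁ ht₁₂))
  have hk₂w₂ := hk₂w.mono_set (uIcc_subset_uIcc (mem_uIcc_of_le ht₁ ht₁₂) right_mem_uIcc)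
  have hk₂₁ : ∀ τ ∈ Ioo 0 t₁, 0 ≤ k₂ τ := fun τ hτ => hk₂ τ (hIoo₁ hτ)
  have hdiffw : IntervalIntegrable (fun τ => (k₁ τ - k₂ τ) * w τ) volume 0 t₁ := by
    simpa only [sub_mul] using hk₁w.sub hk₂w₁
  have hk₁g := intervalIntegrable_mul_of_abs_le ht₁ hk₁m.restrict hgm₁
    (fun τ hτ => (hk₂₁ τ hτ).trans (hk τ hτ)) hg₁ hk₁w
  have hk₂g₁ := intervalIntegrable_mul_of_abs_le ht₁ hk₂m.restrict hgm₁ hk₂₁ hg₁ hk₂w₁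
  have hk₂g₂ := intervalIntegrable_mul_of_abs_le ht₁₂ hk₂m.restrict hgm₂
    (fun τ hτ => hk₂ τ (hIoo₂ hτ)) hg₂ hk₂w₂
  have hsplit : (∫ τ in 0..t₂, k₂ τ * g τ) - ∫ τ in 0..t₁, k₁ τ * g τ
      = (∫ τ in t₁..t₂, k₂ τ * g τ) - ∫ τ in 0..t₁, (k₁ τ - k₂ τ) * g τ := by
    simp only [sub_mul]
    rw [← integral_add_adjacent_intervals hk₂g₁ hk₂g₂, integral_sub hk₁g hk₂g₁]
    ring
  have hnear := abs_integral_mul_le_of_abs_le ht₁₂ (fun τ hτ => hk₂ τ (hIoo₂ hτ)) hg₂ hk₂w₂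
  have hfar := abs_integral_mul_le_of_abs_le ht₁ (fun τ hτ => sub_nonneg.2 (hk τ hτ)) hg₁ hdiffw
  have hfar_mass : ∫ τ in 0..t₁, (k₁ τ - k₂ τ) * w τ ≤ ∫ τ in t₁..t₂, k₂ τ * w τ := by
    simp only [sub_mul]
    rw [integral_sub hk₁w hk₂w₁]
    rw [← integral_add_adjacent_intervals hk₂w₁ hk₂w₂] at hmono
    linarith
  rw [hsplit]
  calc _ ≤ |∫ τ in t₁..t₂, k₂ τ * g τ| + |∫ τ in 0..t₁, (k₁ τ - k₂ τ) * g τ| := abs_sub _ _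
    _ ≤ (M * ∫ τ in t₁..t₂, k₂ τ * w τ) + M * ∫ τ in t₁..t₂, k₂ τ * w τ :=
        add_le_add hnear (hfar.trans (mul_le_mul_of_nonneg_left hfar_mass hM))
    _ = _ := by ring

lemma rpow_one_sub_mul_sub_rpow_le {s τ t₁ t₂ : ℝ} (hs : s ≤ 1) (hτ : 0 ≤ τ) (hτt₁ : τ < t₁)
    (ht₁₂ : t₁ ≤ t₂) : t₂ ^ (1 - s) * (t₂ - τ) ^ (s - 1) ≤ t₁ ^ (1 - s) * (t₁ - τ) ^ (s - 1) := by
  have hquot : ∀ t, τ < t → t ^ (1 - s) * (t - τ) ^ (s - 1) = (t / (t - τ)) ^ (1 - s) := by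
    intro t ht
    rw [Real.div_rpow (by linarith) (by linarith), div_eq_mul_inv, ← Real.rpow_neg (by linarith),
      neg_sub]
  rw [hquot t₂ (by linarith), hquot t₁ hτt₁]
  refine Real.rpow_le_rpow (div_nonneg (by linarith) (by linarith)) ?_ (by linarith)
  rw [div_le_div_iff₀ (by linarith) (by linarith)]
  nlinarith

section WeightedKernel

variable {α t₁ t₂ : ℝ}

lemma integral_rpow_one_sub_mul_sub_rpow_mul_rpow_mono (hα : 0 < α) (ht₁ : 0 ≤ t₁)
    (ht₁₂ : t₁ ≤ t₂) :
    ∫ τ in 0..t₁, t₁ ^ (1 - α) * (t₁ - τ) ^ (α - 1) * τ ^ (α - 1)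
      ≤ ∫ τ in 0..t₂, t₂ ^ (1 - α) * (t₂ - τ) ^ (α - 1) * τ ^ (α - 1) := by
  have hmass : ∀ t, 0 ≤ t → ∫ τ in 0..t, t ^ (1 - α) * (t - τ) ^ (α - 1) * τ ^ (α - 1)
      = t ^ α * ∫ s in 0..1, (1 - s) ^ (α - 1) * s ^ (α - 1) := by
    intro t ht
    rcases ht.eq_or_lt with rfl | ht
    · simp [Real.zero_rpow hα.ne']
    simp only [mul_assoc]
    rw [intervalIntegral.integral_const_mul, integral_sub_rpow_mul_rpow ht, ← mul_assoc,
      ← Real.rpow_add ht]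
    ring_nf
  rw [hmass t₁ ht₁, hmass t₂ (ht₁.trans ht₁₂)]
  refine mul_le_mul_of_nonneg_right (Real.rpow_le_rpow ht₁ ht₁₂ hα.le) ?_
  refine intervalIntegral.integral_nonneg zero_le_one fun s hs => ?_
  have := hs.2
  exact mul_nonneg (Real.rpow_nonneg (by linarith) _) (Real.rpow_nonneg hs.1 _)

lemma intervalIntegrable_rpow_one_sub_mul_sub_rpow_mul_rpow (hα : 0 < α) (hα₁ : α < 1) {t : ℝ}
    (ht : 0 ≤ t) :
    IntervalIntegrable (fun τ => t ^ (1 - α) * (t - τ) ^ (α - 1) * τ ^ (α - 1)) volume 0 t := by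
  simpa only [mul_assoc] using
    (intervalIntegrable_sub_rpow_mul_rpow (by linarith) (by linarith) (by linarith)
      (by linarith) ht).const_mul (t ^ (1 - α))

lemma rpow_one_sub_mul_sub_rpow_mul_rpow_le (hα : 0 < α) (hα₁ : α < 1) {t τ : ℝ} (hτ : 0 < τ)
    (hτt : τ < t) :
    t ^ (1 - α) * (t - τ) ^ (α - 1) * τ ^ (α - 1) ≤ 2 * ((t - τ) ^ (α - 1) + τ ^ (α - 1)) := by
  have ht : 0 < t := hτ.trans hτt
  have hsplit := rpow_mul_rpow_le_of_nonpos (sub_pos.2 hτt) hτ (by linarith : α - 1 ≤ 0)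
    (by linarith : α - 1 ≤ 0)
  rw [sub_add_cancel] at hsplit
  have hconst : t ^ (1 - α) * (t / 2) ^ (α - 1) ≤ 2 := by
    rw [Real.div_rpow ht.le zero_le_two, mul_div_assoc', ← Real.rpow_add ht,
      div_le_iff₀ (by positivity), show 1 - α + (α - 1) = 0 by ring, Real.rpow_zero,
      Real.rpow_sub_one two_ne_zero, mul_div_cancel₀ _ two_ne_zero]
    exact Real.one_le_rpow one_le_two hα.le
  calc t ^ (1 - α) * (t - τ) ^ (α - 1) * τ ^ (α - 1)
      ≤ t ^ (1 - α) * ((t / 2) ^ (α - 1) * ((t - τ) ^ (α - 1) + τ ^ (α - 1))) := by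
        rw [mul_assoc]
        exact mul_le_mul_of_nonneg_left (hsplit.trans_eq (by ring)) (by positivity)
    _ ≤ 2 * ((t - τ) ^ (α - 1) + τ ^ (α - 1)) := by
        rw [← mul_assoc]
        exact mul_le_mul_of_nonneg_right hconst (by positivity)

lemma integral_rpow_one_sub_mul_sub_rpow_mul_rpow_le (hα : 0 < α) (hα₁ : α < 1) (ht₁ : 0 ≤ t₁)
    (ht₁₂ : t₁ ≤ t₂) :
    ∫ τ in t₁..t₂, t₂ ^ (1 - α) * (t₂ - τ) ^ (α - 1) * τ ^ (α - 1)
      ≤ 4 / α * (t₂ - t₁) ^ α := by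
  have hα' : -1 < α - 1 := by linarith
  have ht₁mem : t₁ ∈ uIcc 0 t₂ := mem_uIcc_of_le ht₁ ht₁₂
  calc _ ≤ ∫ τ in t₁..t₂, 2 * ((t₂ - τ) ^ (α - 1) + τ ^ (α - 1)) :=
        intervalIntegral.integral_mono_on_of_le_Ioo ht₁₂
          ((intervalIntegrable_rpow_one_sub_mul_sub_rpow_mul_rpow hα hα₁
            (ht₁.trans ht₁₂)).mono_set (uIcc_subset_uIcc ht₁mem right_mem_uIcc))
          (((intervalIntegrable_sub_rpow t₂ hα' _ _).add
            (intervalIntegrable_rpow' hα')).const_mul 2)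
          fun τ hτ => rpow_one_sub_mul_sub_rpow_mul_rpow_le hα hα₁ (ht₁.trans_lt hτ.1) hτ.2
    _ = 2 * (((t₂ - t₁) ^ α + (t₂ ^ α - t₁ ^ α)) / α) := by
        rw [intervalIntegral.integral_const_mul, intervalIntegral.integral_add
          (intervalIntegrable_sub_rpow t₂ hα' _ _) (intervalIntegrable_rpow' hα'),
          integral_sub_rpow hα', integral_rpow (Or.inl hα'), sub_self,
          Real.zero_rpow (by linarith : α - 1 + 1 ≠ 0), sub_add_cancel]
        ring
    _ ≤ 4 / α * (t₂ - t₁) ^ α := by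
        have hsub : t₂ ^ α - t₁ ^ α ≤ (t₂ - t₁) ^ α := by
          have := Real.rpow_add_le_add_rpow (sub_nonneg.2 ht₁₂) ht₁ hα.le hα₁.le
          rw [sub_add_cancel] at this
          linarith
        rw [div_mul_eq_mul_div, le_div_iff₀ hα, mul_div_assoc', div_mul_cancel₀ _ hα.ne']
        linarith

end WeightedKernel

section SingularKernel

variable {α t₁ t₂ : ℝ}

lemma intervalIntegrable_sub_rpow_neg_mul_rpow (hα : 0 < α) (hα₁ : α < 1) {t : ℝ} (ht : 0 ≤ t) :
    IntervalIntegrable (fun τ => (t - τ) ^ (-α) * τ ^ (α - 1)) volume 0 t :=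
  intervalIntegrable_sub_rpow_mul_rpow (by linarith) (by linarith) (by linarith) (by linarith) ht

lemma integral_sub_rpow_neg_mul_rpow_le (hα : 0 < α) (hα₁ : α < 1) (ht₁ : 0 < t₁)
    (ht₁₂ : t₁ ≤ t₂) :
    ∫ τ in t₁..t₂, (t₂ - τ) ^ (-α) * τ ^ (α - 1)
      ≤ t₁ ^ (α - 1) / (1 - α) * (t₂ - t₁) ^ (1 - α) := by
  have hα' : -1 < -α := by linarith
  have ht₁mem : t₁ ∈ uIcc 0 t₂ := mem_uIcc_of_le ht₁.le ht₁₂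
  calc _ ≤ ∫ τ in t₁..t₂, (t₂ - τ) ^ (-α) * t₁ ^ (α - 1) :=
        intervalIntegral.integral_mono_on_of_le_Ioo ht₁₂
          ((intervalIntegrable_sub_rpow_neg_mul_rpow hα hα₁ (ht₁.le.trans ht₁₂)).mono_set
            (uIcc_subset_uIcc ht₁mem right_mem_uIcc))
          ((intervalIntegrable_sub_rpow t₂ hα' _ _).mul_const _)
          fun τ hτ => mul_le_mul_of_nonneg_left
            (Real.rpow_le_rpow_of_nonpos ht₁ hτ.1.le (by linarith))
            (Real.rpow_nonneg (by linarith [hτ.2]) _)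
    _ = t₁ ^ (α - 1) / (1 - α) * (t₂ - t₁) ^ (1 - α) := by
        rw [intervalIntegral.integral_mul_const, integral_sub_rpow hα', sub_self,
          show -α + 1 = 1 - α by ring, Real.zero_rpow (by linarith : 1 - α ≠ 0)]
        ring

end SingularKernel

section Estimates

variable {α M t₁ t₂ : ℝ} {g : ℝ → ℝ}

lemma rpow_one_sub_mul_fracInt (t : ℝ) :
    t ^ (1 - α) * fracInt α g t
      = 1 / Real.Gamma α * ∫ τ in 0..t, t ^ (1 - α) * (t - τ) ^ (α - 1) * g τ := by
  simp only [fracInt, mul_assoc]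
  rw [mul_left_comm, intervalIntegral.integral_const_mul]

lemma fracInt_one_sub (t : ℝ) :
    fracInt (1 - α) g t = 1 / Real.Gamma (1 - α) * ∫ τ in 0..t, (t - τ) ^ (-α) * g τ := by
  simp only [fracInt, show 1 - α - 1 = -α by ring]

theorem abs_rpow_one_sub_mul_fracInt_sub_le (hα : 0 < α) (hα₁ : α < 1) (hM : 0 ≤ M)
    (hgm : AEStronglyMeasurable g (volume.restrict (Ioc 0 t₂)))
    (hg : ∀ᵐ τ ∂volume.restrict (Ioo 0 t₂), |g τ| ≤ M * τ ^ (α - 1))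
    (ht₁ : 0 ≤ t₁) (ht₁₂ : t₁ ≤ t₂) :
    |t₂ ^ (1 - α) * fracInt α g t₂ - t₁ ^ (1 - α) * fracInt α g t₁|
      ≤ 8 / (α * Real.Gamma α) * M * (t₂ - t₁) ^ α := by
  have ht₂ : 0 ≤ t₂ := ht₁.trans ht₁₂
  have hkernel := abs_integral_sub_integral_le_of_kernel_le
    (k₁ := fun τ => t₁ ^ (1 - α) * (t₁ - τ) ^ (α - 1))
    (k₂ := fun τ => t₂ ^ (1 - α) * (t₂ - τ) ^ (α - 1)) ht₁ ht₁₂ hM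
    (by fun_prop : Measurable _).aestronglyMeasurable
    (by fun_prop : Measurable _).aestronglyMeasurable hgm
    (fun τ hτ => mul_nonneg (Real.rpow_nonneg ht₂ _) (Real.rpow_nonneg (by linarith [hτ.2]) _))
    (fun τ hτ => rpow_one_sub_mul_sub_rpow_le hα₁.le hτ.1.le hτ.2 ht₁₂) hg
    (intervalIntegrable_rpow_one_sub_mul_sub_rpow_mul_rpow hα hα₁ ht₁)
    (intervalIntegrable_rpow_one_sub_mul_sub_rpow_mul_rpow hα hα₁ ht₂)
    (integral_rpow_one_sub_mul_sub_rpow_mul_rpow_mono hα ht₁ ht₁₂)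
  have hΓ : 0 < Real.Gamma α := Real.Gamma_pos_of_pos hα
  rw [rpow_one_sub_mul_fracInt, rpow_one_sub_mul_fracInt, ← mul_sub, abs_mul,
    abs_of_pos (by positivity)]
  calc _ ≤ 1 / Real.Gamma α * (2 * M * (4 / α * (t₂ - t₁) ^ α)) :=
        mul_le_mul_of_nonneg_left (hkernel.trans (mul_le_mul_of_nonneg_left
          (integral_rpow_one_sub_mul_sub_rpow_mul_rpow_le hα hα₁ ht₁ ht₁₂) (by positivity)))
          (by positivity)
    _ = _ := by field_simp; ring

theorem abs_fracInt_one_sub_sub_le (hα : 0 < α) (hα₁ : α < 1) (hM : 0 ≤ M)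
    (hgm : AEStronglyMeasurable g (volume.restrict (Ioc 0 t₂)))
    (hg : ∀ᵐ τ ∂volume.restrict (Ioo 0 t₂), |g τ| ≤ M * τ ^ (α - 1))
    {a : ℝ} (ha : 0 < a) (ha₁ : a ≤ t₁) (ht₁₂ : t₁ ≤ t₂) :
    |fracInt (1 - α) g t₂ - fracInt (1 - α) g t₁|
      ≤ 2 * a ^ (α - 1) / ((1 - α) * Real.Gamma (1 - α)) * M * (t₂ - t₁) ^ (1 - α) := by
  have ht₁ : 0 < t₁ := ha.trans_le ha₁
  have ht₂ : 0 < t₂ := ht₁.trans_le ht₁₂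
  have hmass : ∀ t, 0 < t → ∫ τ in 0..t, (t - τ) ^ (-α) * τ ^ (α - 1)
      = ∫ s in 0..1, (1 - s) ^ (-α) * s ^ (α - 1) := fun t ht => by
    rw [integral_sub_rpow_mul_rpow ht, show -α + (α - 1) + 1 = 0 by ring, Real.rpow_zero,
      one_mul]
  have hkernel := abs_integral_sub_integral_le_of_kernel_le
    (k₁ := fun τ => (t₁ - τ) ^ (-α)) (k₂ := fun τ => (t₂ - τ) ^ (-α)) ht₁.le ht₁₂ hM
    (by fun_prop : Measurable _).aestronglyMeasurable
    (by fun_prop : Measurable _).aestronglyMeasurable hgm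
    (fun τ hτ => Real.rpow_nonneg (by linarith [hτ.2]) _)
    (fun τ hτ => Real.rpow_le_rpow_of_nonpos (by linarith [hτ.2]) (by linarith) (by linarith)) hg
    (intervalIntegrable_sub_rpow_neg_mul_rpow hα hα₁ ht₁.le)
    (intervalIntegrable_sub_rpow_neg_mul_rpow hα hα₁ ht₂.le)
    ((hmass t₁ ht₁).trans (hmass t₂ ht₂).symm).le
  have htail : ∫ τ in t₁..t₂, (t₂ - τ) ^ (-α) * τ ^ (α - 1)
      ≤ a ^ (α - 1) / (1 - α) * (t₂ - t₁) ^ (1 - α) :=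
    (integral_sub_rpow_neg_mul_rpow_le hα hα₁ ht₁ ht₁₂).trans <| mul_le_mul_of_nonneg_right
      (div_le_div_of_nonneg_right (Real.rpow_le_rpow_of_nonpos ha ha₁ (by linarith))
        (by linarith)) (Real.rpow_nonneg (by linarith) _)
  have hΓ : 0 < Real.Gamma (1 - α) := Real.Gamma_pos_of_pos (by linarith)
  rw [fracInt_one_sub, fracInt_one_sub, ← mul_sub, abs_mul, abs_of_pos (by positivity)]
  calc _ ≤ 1 / Real.Gamma (1 - α) * (2 * M * (a ^ (α - 1) / (1 - α) * (t₂ - t₁) ^ (1 - α))) :=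
        mul_le_mul_of_nonneg_left (hkernel.trans (mul_le_mul_of_nonneg_left htail
          (by positivity))) (by positivity)
    _ = _ := by field_simp

end Estimates

/-- Let `α ∈ (0,1)`. There is a constant `c₀ = c₀(α)` such that for every
`T > 0` and every absolutely continuous `f` on `[0,T]` (with a.e. derivative `f'`) with
`‖t^{1-α} f'‖_{L^∞(0,T)} ≤ M`, one has
`|t₂^{1-α}(I^α f')(t₂) − t₁^{1-α}(I^α f')(t₁)| ≤ c₀ M (t₂−t₁)^α` for `0 ≤ t₁ ≤ t₂ ≤ T`.
In particular `t ↦ t^{1-α}(I^α f')(t)` is `α`-Hölder on `[0,T]` and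
`D^α f = I^{1-α} f'` is `(1-α)`-Hölder on every `[a,T] ⊆ (0,T]`. -/
theorem stmt_12 (α : ℝ) (hα : α ∈ Set.Ioo (0:ℝ) 1) :
    ∃ c₀ > (0:ℝ), ∀ T > (0:ℝ), ∀ f f' : ℝ → ℝ, ∀ M : ℝ,
      IntegrableOn f' (Set.Icc 0 T) →
      (∀ t ∈ Set.Icc (0:ℝ) T, f t = f 0 + ∫ τ in (0:ℝ)..t, f' τ) →
      (∀ᵐ t ∂(volume.restrict (Set.Ioo 0 T)), |t ^ (1 - α) * f' t| ≤ M) →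
      (∀ t₁ ∈ Set.Icc (0:ℝ) T, ∀ t₂ ∈ Set.Icc (0:ℝ) T, t₁ ≤ t₂ →
          |t₂ ^ (1 - α) * fracInt α f' t₂ - t₁ ^ (1 - α) * fracInt α f' t₁|
            ≤ c₀ * M * (t₂ - t₁) ^ α) ∧
        (∃ C : ℝ≥0, HolderOnWith C α.toNNReal
            (fun t => t ^ (1 - α) * fracInt α f' t) (Set.Icc 0 T)) ∧
        (∀ a ∈ Set.Ioo (0:ℝ) T, ∃ C : ℝ≥0, HolderOnWith C (1 - α).toNNReal
            (fun t => fracInt (1 - α) f' t) (Set.Icc a T)) := by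
  obtain ⟨hα₀, hα₁⟩ := hα
  have hβ₀ : 0 < 1 - α := sub_pos.2 hα₁
  have hΓ := Real.Gamma_pos_of_pos hα₀
  have hΓ' := Real.Gamma_pos_of_pos hβ₀
  refine ⟨8 / (α * Real.Gamma α), by positivity, ?_⟩
  intro T hT f f' M hf' _ hM
  have hM₀ : 0 ≤ M := by
    have := ae_restrict_neBot.2 (by simpa using hT : volume (Ioo 0 T) ≠ 0)
    obtain ⟨t, ht⟩ := hM.exists
    exact (abs_nonneg _).trans ht
  have hg : ∀ t ≤ T, ∀ᵐ τ ∂volume.restrict (Ioo 0 t), |f' τ| ≤ M * τ ^ (α - 1) := by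
    intro t ht
    refine ae_restrict_of_ae_restrict_of_subset (Ioo_subset_Ioo_right ht) ?_
    filter_upwards [hM, ae_restrict_mem measurableSet_Ioo] with τ hτM hτ
    exact abs_le_mul_rpow_of_abs_rpow_mul_le hτ.1 hτM
  have hgm : ∀ t ≤ T, AEStronglyMeasurable f' (volume.restrict (Ioc 0 t)) := fun t ht =>
    hf'.aestronglyMeasurable.mono_set (Ioc_subset_Icc_self.trans (Icc_subset_Icc_right ht))
  have hest := fun t₁ t₂ (ht₁ : 0 ≤ t₁) (ht₂ : t₂ ≤ T) (ht₁₂ : t₁ ≤ t₂) =>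
    abs_rpow_one_sub_mul_fracInt_sub_le hα₀ hα₁ hM₀ (hgm t₂ ht₂) (hg t₂ ht₂) ht₁ ht₁₂
  refine ⟨fun t₁ ht₁ t₂ ht₂ ht₁₂ => hest t₁ t₂ ht₁.1 ht₂.2 ht₁₂, ?_, fun a ha => ?_⟩
  · exact ⟨_, holderOnWith_of_abs_sub_le (by positivity) hα₀.le
      fun x hx y hy hxy => hest x y hx.1 hy.2 hxy⟩
  · have ha₀ := ha.1
    exact ⟨_, holderOnWith_of_abs_sub_le (by positivity) hβ₀.le fun x hx y hy hxy =>
      abs_fracInt_one_sub_sub_le hα₀ hα₁ hM₀ (hgm y hy.2) (hg y hy.2) ha₀ hx.1 hxy⟩
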